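/- arXiv:2412.05502 — 2 statements merged into one kernel-verified Lean document; each statement's English description precedes it below -/
import Mathlib

section
/- Consider a sequence of multisets of natural numbers M_0, M_1, …, M_L where M_0 consists of n copies of the number 4, each M_{i+1} is obtained from M_i by removing two equal elements a and a and inserting their sum 2a (a merge of two equal-sized groups), and the final multiset M_L has no repeated elements. Then the number of merges is L = n − popcount(n). -/
/-!
Each merge removes one group and keeps the total size `4 n`, and all sizes stay powers of two.
A stable configuration is therefore a set of distinct powers of two summing to `4 n`, i.e. the
binary expansion of `4 n`, so it has `popcount (4 n) = popcount n` groups; the `n` initial groups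
lose one per merge.
-/

def popcount (n : ℕ) : ℕ := (Nat.digits 2 n).sum

def MergeStep (M M' : Multiset ℕ) : Prop :=
  ∃ a R, M = a ::ₘ a ::ₘ R ∧ M' = 2 * a ::ₘ R

theorem popcount_two_mul (n : ℕ) : popcount (2 * n) = popcount n := by
  rcases Nat.eq_zero_or_pos n with rfl | hn
  · rfl
  · rw [popcount, Nat.digits_def' (by norm_num) (by omega)]
    simp [popcount]

theorem popcount_two_mul_add_one (n : ℕ) : popcount (2 * n + 1) = popcount n + 1 := by
  rw [popcount, Nat.digits_def' (by norm_num) (by omega), Nat.mul_add_mod_self_left,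
    Nat.mul_add_div two_pos, List.sum_cons, add_comm]
  rfl

theorem popcount_eq_length_bitIndices (n : ℕ) : popcount n = n.bitIndices.length := by
  induction n using Nat.evenOddRec with
  | h0 => rfl
  | h_even n ih => simp [popcount_two_mul, ih]
  | h_odd n ih => simp [popcount_two_mul_add_one, ih]

theorem popcount_sum_two_pow (s : Finset ℕ) : popcount (∑ i ∈ s, 2 ^ i) = s.card := by
  rw [popcount_eq_length_bitIndices, ← List.toFinset_card_of_nodup Nat.bitIndices_nodup,
    Finset.toFinset_bitIndices_sum_two_pow]

theorem Multiset.Nodup.card_eq_popcount_sum {S : Multiset ℕ} (hS : S.Nodup)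
    (hpow : ∀ x ∈ S, x.isPowerOfTwo) : card S = popcount S.sum := by
  lift S to Finset ℕ using hS
  have hlog : Set.InjOn (Nat.log 2) S := by
    intro x hx y hy hxy
    obtain ⟨k, rfl⟩ := hpow x hx
    obtain ⟨l, rfl⟩ := hpow y hy
    simp_all [Nat.log_pow]
  have hsum : S.val.sum = ∑ i ∈ S.image (Nat.log 2), 2 ^ i := by
    rw [Finset.sum_image hlog, Finset.sum_val]
    refine Finset.sum_congr rfl fun x hx => ?_
    obtain ⟨k, rfl⟩ := hpow x hx
    simp [Nat.log_pow]
  rw [hsum, popcount_sum_two_pow, Finset.card_image_of_injOn hlog, Finset.card_val]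

namespace MergeStep

variable {M M' : Multiset ℕ}

theorem card_eq (h : MergeStep M M') : Multiset.card M = Multiset.card M' + 1 := by
  obtain ⟨a, R, rfl, rfl⟩ := h
  simp

theorem sum_eq (h : MergeStep M M') : M'.sum = M.sum := by
  obtain ⟨a, R, rfl, rfl⟩ := h
  simp only [Multiset.sum_cons]
  ring

theorem isPowerOfTwo (h : MergeStep M M') (hpow : ∀ x ∈ M, x.isPowerOfTwo) :
    ∀ x ∈ M', x.isPowerOfTwo := by
  obtain ⟨a, R, rfl, rfl⟩ := h
  simp only [Multiset.mem_cons, forall_eq_or_imp] at hpow ⊢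
  obtain ⟨⟨k, rfl⟩, -, hR⟩ := hpow
  exact ⟨⟨k + 1, by rw [pow_succ, mul_comm]⟩, hR⟩

end MergeStep

theorem mergeSteps_invariants {M : ℕ → Multiset ℕ} {L : ℕ}
    (hstep : ∀ i < L, MergeStep (M i) (M (i + 1))) (hpow : ∀ x ∈ M 0, x.isPowerOfTwo) :
    Multiset.card (M L) + L = Multiset.card (M 0) ∧ (M L).sum = (M 0).sum ∧
      ∀ x ∈ M L, x.isPowerOfTwo := by
  induction L with
  | zero => exact ⟨rfl, rfl, hpow⟩
  | succ L ih =>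
    obtain ⟨hcard, hsum, hpowL⟩ := ih fun i hi => hstep i (by omega)
    have h := hstep L L.lt_succ_self
    exact ⟨by rw [← hcard, h.card_eq]; ring, h.sum_eq.trans hsum, h.isPowerOfTwo hpowL⟩

/-- Starting from `n` copies of `4` and merging two equal elements into their
sum until no two elements are equal, the number of merges is `n − popcount n`. -/
theorem merge_count (n L : ℕ) (M : ℕ → Multiset ℕ)
    (h0 : M 0 = Multiset.replicate n 4)
    (hstep : ∀ i < L, MergeStep (M i) (M (i + 1)))
    (hfinal : (M L).Nodup) :
    L = n - popcount n := by
  have hpow₀ : ∀ x ∈ M 0, x.isPowerOfTwo := by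
    rw [h0]
    exact fun x hx => ⟨2, Multiset.eq_of_mem_replicate hx⟩
  obtain ⟨hcard, hsum, hpow⟩ := mergeSteps_invariants hstep hpow₀
  have hstable : Multiset.card (M L) = popcount n := by
    rw [hfinal.card_eq_popcount_sum hpow, hsum, h0, Multiset.sum_replicate, smul_eq_mul,
      show n * 4 = 2 * (2 * n) by ring, popcount_two_mul, popcount_two_mul]
  rw [h0, Multiset.card_replicate] at hcard
  omega
end

section
/- Let α be a natural number divisible by 4 with α/4 ≥ 2, and let S > 0 be a real number. Then the best-case EC-Chain bandwidth cost α·S + (α/4 − popcount(α/4))·S is at least ((5/4)·α − ⌈log₂(α/4)⌉)·S. -/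
lemma popcount_rec {n : ℕ} (hn : 0 < n) : popcount n = n % 2 + popcount (n / 2) := by
  unfold popcount
  rw [Nat.digits_def' (by norm_num) hn, List.sum_cons]

lemma popcount_le_of_lt_pow : ∀ y q : ℕ, q < 2 ^ y → popcount q ≤ y := by
  intro y
  induction y with
  | zero => intro q hq; interval_cases q; simp [popcount]
  | succ y ih =>
    intro q hq
    rcases Nat.eq_zero_or_pos q with h | h
    · simp [h, popcount]
    · rw [popcount_rec h]
      have h2 : q / 2 < 2 ^ y := Nat.div_lt_of_lt_mul (by rw [pow_succ] at hq; omega)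
      have := ih (q / 2) h2
      omega

lemma popcount_le_clog_succ (q : ℕ) : popcount q ≤ Nat.clog 2 (q + 1) :=
  popcount_le_of_lt_pow _ q (Nat.lt_of_succ_le (Nat.le_pow_clog (by norm_num) _))

lemma popcount_le_clog {m : ℕ} (hm : 2 ≤ m) : popcount m ≤ Nat.clog 2 m := by
  rw [Nat.clog_of_two_le (by norm_num) hm, popcount_rec (by omega)]
  rcases Nat.even_or_odd m with ⟨r, hr⟩ | ⟨r, hr⟩
  · have hr1 : 1 ≤ r := by omega
    have h1 : (m + 2 - 1) / 2 = r := by omega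
    have h2 : m % 2 = 0 := by omega
    have h3 : m / 2 = r := by omega
    rw [h1, h2, h3]
    have : Nat.clog 2 (r + 1) ≤ Nat.clog 2 r + 1 := by
      rw [Nat.clog_le_iff_le_pow (by norm_num), pow_succ]
      have := Nat.le_pow_clog (b := 2) (by norm_num) r
      omega
    have := popcount_le_clog_succ r
    omega
  · have h1 : (m + 2 - 1) / 2 = r + 1 := by omega
    have h2 : m % 2 = 1 := by omega
    have h3 : m / 2 = r := by omega
    rw [h1, h2, h3]
    have := popcount_le_clog_succ r
    omega

/-- Best-case EC-Chain bandwidth cost lower bound (Theorem 2, lower half). -/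
theorem bandwidth_lower_bound (α : ℕ) (hdvd : 4 ∣ α) (hα : 2 ≤ α / 4)
    (S : ℝ) (hS : 0 < S) :
    ((5 / 4 : ℝ) * α - (Nat.clog 2 (α / 4) : ℝ)) * S
      ≤ (α : ℝ) * S + ((α / 4 - popcount (α / 4) : ℕ) : ℝ) * S := by
  obtain ⟨m, rfl⟩ := hdvd
  have hm4 : 4 * m / 4 = m := by omega
  rw [hm4] at hα ⊢
  have hpc : popcount m ≤ Nat.clog 2 m := popcount_le_clog hα
  have hpm : popcount m ≤ m :=
    popcount_le_of_lt_pow m m (Nat.lt_two_pow_self (n := m))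
  rw [← add_mul]
  apply mul_le_mul_of_nonneg_right _ hS.le
  push_cast [Nat.cast_sub hpm]
  have : (popcount m : ℝ) ≤ (Nat.clog 2 m : ℝ) := by exact_mod_cast hpc
  linarith
end
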